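/- For any points M_0, …, M_D ∈ ℝ², there exists a Bézier curve of degree D passing through these points: there exist control points P_0, …, P_D ∈ ℝ² such that Σ_{j=0}^{D} b_{j,D}(i/D) · P_j = M_i for every i ∈ {0,…,D} (D ≥ 1). -/
import Mathlib

open Polynomial in
/-- The Bernstein polynomial `b_{i,D}(t) = C(D,i) tⁱ (1−t)^{D−i}` as a real function. -/
noncomputable def bern (D i : ℕ) (t : ℝ) : ℝ :=
  (D.choose i : ℝ) * t ^ i * (1 - t) ^ (D - i)

lemma bern_eval (D j : ℕ) (t : ℝ) :
    (bernsteinPolynomial ℝ D j).eval t = bern D j t := by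
  simp [bernsteinPolynomial, bern]

lemma bernstein_natDegree_le (D j : ℕ) :
    (bernsteinPolynomial ℝ D j).natDegree ≤ D := by
  rcases le_or_gt j D with h | h
  · unfold bernsteinPolynomial
    refine le_trans (Polynomial.natDegree_mul_le) ?_
    have h1 : ((Nat.choose D j : Polynomial ℝ) * Polynomial.X ^ j).natDegree ≤ j := by
      refine le_trans (Polynomial.natDegree_mul_le) ?_
      simp [Polynomial.natDegree_natCast]
    have h2 : ((1 - Polynomial.X : Polynomial ℝ) ^ (D - j)).natDegree ≤ D - j := by
      refine le_trans (Polynomial.natDegree_pow_le) ?_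
      have : (1 - Polynomial.X : Polynomial ℝ).natDegree ≤ 1 := by
        refine le_trans (Polynomial.natDegree_sub_le _ _) ?_
        simp
      nlinarith
    omega
  · rw [bernsteinPolynomial.eq_zero_of_lt ℝ h]; simp

/-- Real linear independence of Bernstein polynomials, in the form we need. -/
lemma bern_coeffs_zero (D : ℕ) (c : Fin (D + 1) → ℝ)
    (hp : ∑ j : Fin (D + 1), c j • bernsteinPolynomial ℝ D (j : ℕ) = 0) :
    c = 0 := by
  have key : ∀ k : ℕ, ∀ j : Fin (D + 1), (j : ℕ) = k → c j = 0 := by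
    intro k
    induction k using Nat.strong_induction_on with
    | _ k ih =>
      intro j hj
      have h0 : ∑ i : Fin (D + 1),
          c i * (Polynomial.derivative^[k] (bernsteinPolynomial ℝ D (i : ℕ))).eval 0 = 0 := by
        have := congr_arg (fun q => (Polynomial.derivative^[k] q).eval 0) hp
        simpa [Polynomial.iterate_derivative_sum, Polynomial.iterate_derivative_smul,
          Polynomial.eval_finset_sum] using this
      have hsplit : ∀ i : Fin (D + 1), i ∈ Finset.univ → i ≠ j →
          c i * (Polynomial.derivative^[k] (bernsteinPolynomial ℝ D (i : ℕ))).eval 0 = 0 := by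
        intro i _ hi
        rcases lt_trichotomy (i : ℕ) k with h | h | h
        · rw [ih (i : ℕ) h i rfl]; ring
        · exact absurd (Fin.ext (h.trans hj.symm)) hi
        · rw [bernsteinPolynomial.iterate_derivative_at_0_eq_zero_of_lt ℝ D h]; ring
      rw [Finset.sum_eq_single_of_mem j (Finset.mem_univ j) hsplit] at h0
      have hkD : k ≤ D := by have := j.isLt; omega
      have hne : (Polynomial.derivative^[k] (bernsteinPolynomial ℝ D (j : ℕ))).eval 0 ≠ 0 := by
        rw [hj]
        exact bernsteinPolynomial.iterate_derivative_at_0_ne_zero ℝ D k hkD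
      exact (mul_eq_zero.mp h0).resolve_right hne
  funext j
  exact key (j : ℕ) j rfl

/-- For any points `M₀,…,M_D` there exists a Bézier curve of degree `D`
passing through these points (at the regular parameters `i/D`). -/
theorem exists_bezier_through_points (D : ℕ) (hD : 1 ≤ D) (M : Fin (D + 1) → ℝ × ℝ) :
    ∃ P : Fin (D + 1) → ℝ × ℝ, ∀ i : Fin (D + 1),
      ∑ j : Fin (D + 1), bern D j ((i : ℝ) / (D : ℝ)) • P j = M i := by
  classical
  set B : Matrix (Fin (D + 1)) (Fin (D + 1)) ℝ :=
    fun i j => bern D j ((i : ℝ) / (D : ℝ)) with hB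
  have hDpos : (0 : ℝ) < D := by exact_mod_cast hD
  have hker : ∀ v : Fin (D + 1) → ℝ, B.mulVec v = 0 → v = 0 := by
    intro v hv
    apply bern_coeffs_zero D v
    set p : Polynomial ℝ := ∑ j : Fin (D + 1), v j • bernsteinPolynomial ℝ D (j : ℕ) with hpdef
    refine Polynomial.eq_zero_of_natDegree_lt_card_of_eval_eq_zero p
      (f := fun i : Fin (D + 1) => (i : ℝ) / (D : ℝ)) ?_ ?_ ?_
    · intro a b hab
      have : (a : ℝ) = b := by
        field_simp at hab
        exact_mod_cast hab
      exact Fin.ext (by exact_mod_cast this)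
    · intro i
      have hv' := congr_fun hv i
      simp only [Matrix.mulVec, dotProduct, hB, Pi.zero_apply] at hv'
      rw [hpdef]
      simp only [Polynomial.eval_finset_sum, Polynomial.eval_smul, smul_eq_mul, bern_eval]
      rw [← hv']
      exact Finset.sum_congr rfl fun j _ => mul_comm _ _
    · rw [Fintype.card_fin]
      refine lt_of_le_of_lt (Polynomial.natDegree_sum_le _ _) ?_
      rw [Finset.fold_max_lt]
      refine ⟨by omega, fun j _ => ?_⟩
      exact lt_of_le_of_lt (le_trans (Polynomial.natDegree_smul_le _ _)
        (bernstein_natDegree_le D j)) (by omega)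
  have hinj : Function.Injective B.mulVec := by
    have : Function.Injective B.mulVecLin := by
      rw [← LinearMap.ker_eq_bot, LinearMap.ker_eq_bot']
      intro v hv
      exact hker v (by simpa using hv)
    simpa [← Matrix.coe_mulVecLin] using this
  have hunit : IsUnit B := Matrix.mulVec_injective_iff_isUnit.mp hinj
  have hsurj : Function.Surjective B.mulVec := Matrix.mulVec_surjective_iff_isUnit.mpr hunit
  obtain ⟨x, hx⟩ := hsurj (fun i => (M i).1)
  obtain ⟨y, hy⟩ := hsurj (fun i => (M i).2)
  refine ⟨fun j => (x j, y j), fun i => ?_⟩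
  have hx' := congr_fun hx i
  have hy' := congr_fun hy i
  simp only [Matrix.mulVec, dotProduct, hB] at hx' hy'
  have : (∑ j : Fin (D + 1), bern D j ((i : ℝ) / (D : ℝ)) • ((x j, y j) : ℝ × ℝ)) =
      (∑ j : Fin (D + 1), bern D j ((i : ℝ) / (D : ℝ)) * x j,
       ∑ j : Fin (D + 1), bern D j ((i : ℝ) / (D : ℝ)) * y j) := by
    rw [Prod.ext_iff]
    constructor
    · rw [Prod.fst_sum]; rfl
    · rw [Prod.snd_sum]; rfl
  rw [this, hx', hy']
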